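/- Let μ be a positive Radon measure on ℝⁿ, S a cube with ℓ(S) > 0, and K a Calderón–Zygmund kernel with parameter δ ∈ (0,1] and growth exponent α: |K(t,x) − K(t,x')| ≲ (|x−x'|/|t−x|)^δ / |t−x|^α whenever 2|x−x'| < |t−x|. Let J be a cube with Ĵ ⊆ (1/2)S (so dist(J, ∂S) ≥ ℓ(S)/4), and let h_J be a function supported in Ĵ with mean zero and ‖h_J‖_{L¹(μ)} ≤ ℓ(J)⁰·μ(Ĵ)^{1/2} (e.g., a Haar function). Then |∫_{Q∖S} ∫ K(t,x) h_J(x) dμ(x) dμ(t)| ≲ (ℓ(J)/ℓ(S))^δ μ(Ĵ)^{1/2} ρ(S), where ρ(S) = Σ_{m≥1} μ(mS)/(ℓ(mS)^α m^{δ/2+1}) is the density of μ at S, and Q ⊇ S is any larger cube. -/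

import Mathlib

open MeasureTheory Set
open scoped ENNReal

noncomputable section

/-- Closed axis-parallel cube of center `c` and half side length `r`. -/
def cCube (n : ℕ) (c : Fin n → ℝ) (r : ℝ) : Set (Fin n → ℝ) :=
  {x | ∀ i, |x i - c i| ≤ r}

/-!
Because `h_J` has mean zero, `∫ K(t,x) h_J(x) dμ(x) = ∫ (K(t,x) - K(t,c_J)) h_J(x) dμ(x)`.
For `t ∉ S` the Hölder condition, applied through the midpoint of `x` and `c_J` so that it is
used within its range `2|x - x'| < |t - x|`, bounds the difference by
`ℓ(J)^δ |t - c_S|^(-(δ+α))`, so the inner integral is `≲ ℓ(J)^δ μ(Ĵ)^(1/2) |t - c_S|^(-(δ+α))`.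
Cubes are balls of the sup metric. Writing the decay `a_j = ((j+1) ℓ(S)/2)^(-(δ+α))` on the shell
`(j+2)S ∖ (j+1)S` as the telescoping sum `∑_{i ≥ j} (a_i - a_{i+1})` (Abel summation) bounds the
outer integral by `∑_j (a_j - a_{j+1}) μ((j+2)S)`, and
`a_j - a_{j+1} ≲ (j+1)^(-(δ+α)-1) ℓ(S)^(-(δ+α))` is `≲ ℓ(S)^(-δ)` times the weight of `μ((j+2)S)`
in `ρ(S)`.
-/

open Metric Filter Topology

lemma le_of_closedBall_subset_closedBall {E : Type*} [NormedAddCommGroup E] [NormedSpace ℝ E]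
    [Nontrivial E] {x y : E} {r R : ℝ} (hr : 0 ≤ r) (h : closedBall x r ⊆ closedBall y R) :
    r ≤ R := by
  have hR : 0 ≤ R := dist_nonneg.trans (h (mem_closedBall_self hr))
  have := diam_mono h isBounded_closedBall
  rw [diam_closedBall_eq x hr, diam_closedBall_eq y hR] at this
  linarith

def IsHolderKernel {X : Type*} [PseudoMetricSpace X] (K : X → X → ℝ) (C δ α : ℝ) : Prop :=
  ∀ t x x', 2 * dist x x' < dist t x →
    |K t x - K t x'| ≤ C * (dist x x' / dist t x) ^ δ / dist t x ^ α

lemma IsHolderKernel.abs_sub_le_of_far {X : Type*} [PseudoMetricSpace X] {K : X → X → ℝ}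
    {C δ α ℓ : ℝ} (hK : IsHolderKernel K C δ α) (hC : 0 ≤ C) (hδ : 0 ≤ δ) (hα : 0 ≤ α)
    {t y z p : X} (hyz : 2 * dist y z ≤ ℓ) (hℓ : ℓ < dist t y) (hp : 0 < dist t p)
    (hpy : dist t p ≤ 2 * dist t y) :
    |K t y - K t z| ≤ C * 2 ^ (δ + α) * ℓ ^ δ * dist t p ^ (-(δ + α)) := by
  have hy : 0 < dist t y := by linarith
  have hℓ0 : 0 ≤ ℓ := le_trans (by positivity) hyz
  have hfar : dist t y ^ (-(δ + α)) ≤ (dist t p / 2) ^ (-(δ + α)) :=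
    Real.rpow_le_rpow_of_nonpos (by positivity) (by linarith) (by linarith)
  calc |K t y - K t z|
      ≤ C * (dist y z / dist t y) ^ δ / dist t y ^ α := hK t y z (by linarith)
    _ ≤ C * (ℓ / dist t y) ^ δ / dist t y ^ α := by
        gcongr
        linarith [dist_nonneg (x := y) (y := z)]
    _ = C * ℓ ^ δ * dist t y ^ (-(δ + α)) := by
        rw [Real.div_rpow hℓ0 hy.le, Real.rpow_neg hy.le, Real.rpow_add hy]
        field_simp
    _ ≤ C * ℓ ^ δ * (dist t p / 2) ^ (-(δ + α)) := by gcongr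
    _ = C * 2 ^ (δ + α) * ℓ ^ δ * dist t p ^ (-(δ + α)) := by
        rw [Real.div_rpow hp.le zero_le_two, Real.rpow_neg zero_le_two, div_eq_mul_inv, inv_inv]
        ring

lemma IsHolderKernel.abs_sub_center_le {E : Type*} [NormedAddCommGroup E] [NormedSpace ℝ E]
    {K : E → E → ℝ} {C δ α : ℝ} (hK : IsHolderKernel K C δ α) (hC : 0 ≤ C) (hδ : 0 ≤ δ)
    (hα : 0 ≤ α) {t cS cJ x : E} {ℓ r : ℝ} (hJ : closedBall cJ ℓ ⊆ closedBall cS r)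
    (ht : t ∉ closedBall cS (2 * r)) (hx : x ∈ closedBall cJ ℓ) :
    |K t x - K t cJ| ≤ 2 * C * 2 ^ (δ + α) * ℓ ^ δ * dist t cS ^ (-(δ + α)) := by
  have hℓ0 : 0 ≤ ℓ := dist_nonneg.trans hx
  have hr0 : 0 ≤ r := dist_nonneg.trans (hJ hx)
  rw [mem_closedBall, not_le] at ht
  have : Nontrivial E := nontrivial_of_ne t cS (dist_pos.1 (by linarith))
  have hℓr : ℓ ≤ r := le_of_closedBall_subset_closedBall hℓ0 hJ
  have hfar : ∀ y ∈ closedBall cS r, ℓ < dist t y ∧ dist t cS ≤ 2 * dist t y := by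
    intro y hy
    have := dist_triangle t y cS
    rw [mem_closedBall] at hy
    constructor <;> linarith
  set m := midpoint ℝ x cJ
  have hm : m ∈ closedBall cS r :=
    (convex_closedBall cS r).segment_subset (hJ hx) (hJ (mem_closedBall_self hℓ0))
      (midpoint_mem_segment x cJ)
  have hxm : 2 * dist x m ≤ ℓ := by
    rw [dist_left_midpoint, Real.norm_two]
    linarith [mem_closedBall.1 hx]
  have hmc : 2 * dist m cJ ≤ ℓ := by
    rw [dist_midpoint_right, Real.norm_two]
    linarith [mem_closedBall.1 hx]
  have hp : 0 < dist t cS := by linarith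
  calc |K t x - K t cJ| ≤ |K t x - K t m| + |K t m - K t cJ| := abs_sub_le _ _ _
    _ ≤ C * 2 ^ (δ + α) * ℓ ^ δ * dist t cS ^ (-(δ + α))
          + C * 2 ^ (δ + α) * ℓ ^ δ * dist t cS ^ (-(δ + α)) :=
        add_le_add (hK.abs_sub_le_of_far hC hδ hα hxm (hfar x (hJ hx)).1 hp (hfar x (hJ hx)).2)
          (hK.abs_sub_le_of_far hC hδ hα hmc (hfar m hm).1 hp (hfar m hm).2)
    _ = 2 * C * 2 ^ (δ + α) * ℓ ^ δ * dist t cS ^ (-(δ + α)) := by ring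

lemma abs_integral_mul_le_of_integral_eq_zero {X : Type*} [MeasurableSpace X] {μ : Measure X}
    {k h : X → ℝ} {s : Set X} {a C : ℝ} (hh : Integrable h μ) (hmean : ∫ x, h x ∂μ = 0)
    (hsupp : ∀ x ∉ s, h x = 0) (hk : ∀ x ∈ s, |k x - a| ≤ C) :
    |∫ x, k x * h x ∂μ| ≤ C * ∫ x, |h x| ∂μ := by
  -- Subtracting `a * h` changes neither integrability nor, thanks to the mean zero, the integral.
  have hshift : ∫ x, k x * h x ∂μ = ∫ x, (k x - a) * h x ∂μ := by
    simp_rw [sub_mul]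
    by_cases hkh : Integrable (fun x => k x * h x) μ
    · rw [integral_sub hkh (hh.const_mul a), integral_const_mul, hmean, mul_zero, sub_zero]
    · refine (integral_undef hkh).trans (integral_undef fun hsub => hkh ?_).symm
      exact (hsub.add (hh.const_mul a)).congr (ae_of_all _ fun x => sub_add_cancel _ _)
  rw [hshift, ← integral_const_mul, ← Real.norm_eq_abs]
  refine norm_integral_le_of_norm_le (hh.abs.const_mul C) (ae_of_all _ fun x => ?_)
  rw [Real.norm_eq_abs, abs_mul]
  by_cases hx : x ∈ s
  · exact mul_le_mul_of_nonneg_right (hk x hx) (abs_nonneg _)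
  · simp [hsupp x hx]

lemma IsHolderKernel.abs_integral_mul_le {E : Type*} [NormedAddCommGroup E] [NormedSpace ℝ E]
    [MeasurableSpace E] {μ : Measure E} {K : E → E → ℝ} {C δ α : ℝ} (hK : IsHolderKernel K C δ α)
    (hC : 0 ≤ C) (hδ : 0 ≤ δ) (hα : 0 ≤ α) {h : E → ℝ} {t cS cJ : E} {ℓ r : ℝ}
    (hJ : closedBall cJ ℓ ⊆ closedBall cS r) (ht : t ∉ closedBall cS (2 * r))
    (hh : Integrable h μ) (hsupp : ∀ x ∉ closedBall cJ ℓ, h x = 0) (hmean : ∫ x, h x ∂μ = 0) :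
    |∫ x, K t x * h x ∂μ| ≤
      2 * C * 2 ^ (δ + α) * ℓ ^ δ * dist t cS ^ (-(δ + α)) * ∫ x, |h x| ∂μ :=
  abs_integral_mul_le_of_integral_eq_zero hh hmean hsupp fun _ hx =>
    hK.abs_sub_center_le hC hδ hα hJ ht hx

lemma ofReal_eq_tsum_ofReal_sub_succ {a : ℕ → ℝ} (ha : Antitone a) (h0 : Tendsto a atTop (𝓝 0)) :
    ENNReal.ofReal (a 0) = ∑' j, ENNReal.ofReal (a j - a (j + 1)) := by
  have hd : ∀ j, 0 ≤ a j - a (j + 1) := fun j => sub_nonneg.2 (ha j.le_succ)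
  have hsum : HasSum (fun j => a j - a (j + 1)) (a 0) := by
    rw [hasSum_iff_tendsto_nat_of_nonneg hd]
    simp_rw [Finset.sum_range_sub']
    simpa using (tendsto_const_nhds (x := a 0)).sub h0
  rw [← ENNReal.ofReal_tsum_of_nonneg hd hsum.summable, hsum.tsum_eq]

lemma ofReal_le_tsum_indicator_closedBall {X : Type*} [PseudoMetricSpace X] {x₀ t : X} {r : ℝ}
    (hr : 0 < r) {φ : ℝ → ℝ} (hφ : AntitoneOn φ (Ici r)) (hφ0 : Tendsto φ atTop (𝓝 0))
    (ht : r < dist t x₀) :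
    ENNReal.ofReal (φ (dist t x₀)) ≤
      ∑' j : ℕ, (closedBall x₀ ((j + 2) * r)).indicator
        (fun _ => ENNReal.ofReal (φ ((j + 1) * r) - φ ((j + 2) * r))) t := by
  set a : ℕ → ℝ := fun j => φ ((j + 1) * r)
  have ha : Antitone a := fun i j hij =>
    hφ (by simp only [mem_Ici]; nlinarith [(i.cast_nonneg : (0:ℝ) ≤ i)])
      (by simp only [mem_Ici]; nlinarith [(j.cast_nonneg : (0:ℝ) ≤ j)]) (by gcongr)
  have ha0 : Tendsto a atTop (𝓝 0) :=
    hφ0.comp (tendsto_atTop_add_const_right _ 1 tendsto_natCast_atTop_atTop |>.atTop_mul_const hr)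
  have hd : ∀ j : ℕ, φ ((j + 1) * r) - φ ((j + 2) * r) = a j - a (j + 1) := fun j => by
    simp only [a]; push_cast; ring_nf
  simp_rw [hd]
  set k := ⌊dist t x₀ / r⌋₊ - 1
  have hk : (k : ℝ) + 1 = ⌊dist t x₀ / r⌋₊ := by
    have : 1 ≤ ⌊dist t x₀ / r⌋₊ := Nat.le_floor (by rw [Nat.cast_one, one_le_div hr]; exact ht.le)
    rw [← Nat.cast_add_one, Nat.sub_add_cancel this]
  have hk1 : ((k : ℝ) + 1) * r ≤ dist t x₀ := by
    rw [hk, ← le_div_iff₀ hr]; exact Nat.floor_le (by positivity)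
  have hk2 : dist t x₀ ≤ ((k : ℝ) + 2) * r := by
    rw [show (k : ℝ) + 2 = (k + 1) + 1 by ring, hk, ← div_le_iff₀ hr]
    exact (Nat.lt_floor_add_one _).le
  have htel := ofReal_eq_tsum_ofReal_sub_succ (a := fun i => a (i + k))
    (ha.comp_monotone fun i j hij => by omega) (ha0.comp (tendsto_add_atTop_nat k))
  calc ENNReal.ofReal (φ (dist t x₀))
      ≤ ENNReal.ofReal (a k) :=
        ENNReal.ofReal_le_ofReal (hφ (mem_Ici.2 (by nlinarith)) (mem_Ici.2 ht.le) hk1)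
    _ = ∑' i, ENNReal.ofReal (a (i + k) - a (i + k + 1)) := by
        simpa [add_right_comm] using htel
    _ = ∑' i, (closedBall x₀ ((((i + k : ℕ) : ℝ) + 2) * r)).indicator
          (fun _ => ENNReal.ofReal (a (i + k) - a (i + k + 1))) t := by
        refine tsum_congr fun i => ?_
        rw [indicator_of_mem (mem_closedBall.2 (hk2.trans (by gcongr; simp)))]
    _ ≤ _ := ENNReal.tsum_comp_le_tsum_of_injective (add_left_injective k)
        (fun j => (closedBall x₀ ((j + 2) * r)).indicator
          (fun _ => ENNReal.ofReal (a j - a (j + 1))) t)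

lemma lintegral_compl_closedBall_le_tsum {X : Type*} [PseudoMetricSpace X] [MeasurableSpace X]
    [OpensMeasurableSpace X] (μ : Measure X) (x₀ : X) {r : ℝ} (hr : 0 < r) {φ : ℝ → ℝ}
    (hφ : AntitoneOn φ (Ici r)) (hφ0 : Tendsto φ atTop (𝓝 0)) :
    ∫⁻ t in (closedBall x₀ r)ᶜ, ENNReal.ofReal (φ (dist t x₀)) ∂μ ≤
      ∑' j : ℕ, ENNReal.ofReal (φ ((j + 1) * r) - φ ((j + 2) * r)) *
        μ (closedBall x₀ ((j + 2) * r)) := by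
  calc ∫⁻ t in (closedBall x₀ r)ᶜ, ENNReal.ofReal (φ (dist t x₀)) ∂μ
      ≤ ∫⁻ t in (closedBall x₀ r)ᶜ, ∑' j : ℕ, (closedBall x₀ ((j + 2) * r)).indicator
          (fun _ => ENNReal.ofReal (φ ((j + 1) * r) - φ ((j + 2) * r))) t ∂μ :=
        setLIntegral_mono' measurableSet_closedBall.compl fun t ht =>
          ofReal_le_tsum_indicator_closedBall hr hφ hφ0 (by simpa using ht)
    _ ≤ ∫⁻ t, ∑' j : ℕ, (closedBall x₀ ((j + 2) * r)).indicator
          (fun _ => ENNReal.ofReal (φ ((j + 1) * r) - φ ((j + 2) * r))) t ∂μ :=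
        setLIntegral_le_lintegral _ _
    _ = _ := by
        rw [lintegral_tsum fun j =>
          (measurable_const.indicator measurableSet_closedBall).aemeasurable]
        simp_rw [lintegral_indicator_const measurableSet_closedBall]

lemma rpow_neg_sub_rpow_neg_le {s x y : ℝ} (hs : 0 ≤ s) (hx : 0 < x) (hxy : x ≤ y) :
    x ^ (-s) - y ^ (-s) ≤ (s + 1) * ((y - x) / y) * x ^ (-s) := by
  have hy : 0 < y := hx.trans_le hxy
  have hq0 : 0 < x / y := div_pos hx hy
  have hq1 : x / y ≤ 1 := (div_le_one hy).2 hxy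
  -- Bernoulli's inequality needs an exponent `≥ 1`, so it is applied with `s + 1`
  have hbern : 1 - (s + 1) * (1 - x / y) ≤ (x / y) ^ s := by
    have h1 := one_add_mul_self_le_rpow_one_add (s := x / y - 1) (by linarith) (p := s + 1)
      (by linarith)
    have h2 : (x / y) ^ (s + 1) ≤ (x / y) ^ s :=
      Real.rpow_le_rpow_of_exponent_ge hq0 hq1 (by linarith)
    rw [add_sub_cancel] at h1
    linarith
  have hyx : y ^ (-s) = x ^ (-s) * (x / y) ^ s := by
    rw [Real.div_rpow hx.le hy.le, Real.rpow_neg hx.le, Real.rpow_neg hy.le]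
    field_simp
  have hsub : (y - x) / y = 1 - x / y := by field_simp
  rw [hyx, hsub]
  nlinarith [Real.rpow_pos_of_pos hx (-s)]

lemma shell_difference_mul_weight_le {α δ L u : ℝ} (hα : 0 ≤ α) (hδ : 0 ≤ δ) (hL : 0 < L)
    (hu : 1 ≤ u) :
    ((u * (L / 2)) ^ (-(δ + α)) - ((u + 1) * (L / 2)) ^ (-(δ + α))) *
        (((u + 1) * L) ^ α * (u + 1) ^ (δ / 2 + 1)) ≤
      (δ + α + 1) * 4 ^ (δ + α) * L ^ (-δ) := by
  have hu0 : 0 < u := one_pos.trans_le hu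
  have hdiff := rpow_neg_sub_rpow_neg_le (s := δ + α) (by positivity)
    (by positivity : 0 < u * (L / 2)) (by nlinarith : u * (L / 2) ≤ (u + 1) * (L / 2))
  have hsplit : ((u * (L / 2)) ^ (-(δ + α))) * (((u + 1) * L) ^ α * (u + 1) ^ (δ / 2 + 1)) =
      2 ^ (δ + α) * L ^ (-δ) * (u + 1) * (u ^ (-(δ + α)) * ((u + 1) ^ α * (u + 1) ^ (δ / 2))) := by
    rw [Real.mul_rpow hu0.le (by positivity), Real.div_rpow hL.le zero_le_two,
      Real.mul_rpow (by positivity) hL.le, Real.rpow_add (by positivity : 0 < u + 1), Real.rpow_one,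
      Real.rpow_neg zero_le_two, show -δ = -(δ + α) + α by ring, Real.rpow_add hL]
    field_simp
  have hpow : u ^ (-(δ + α)) * ((u + 1) ^ α * (u + 1) ^ (δ / 2)) ≤ 2 ^ (δ + α) := by
    rw [← Real.rpow_add (by positivity)]
    calc u ^ (-(δ + α)) * (u + 1) ^ (α + δ / 2)
        ≤ u ^ (-(δ + α)) * (2 ^ (α + δ / 2) * u ^ (α + δ / 2)) := by
          rw [← Real.mul_rpow zero_le_two hu0.le]; gcongr; linarith
      _ = 2 ^ (α + δ / 2) * u ^ (-(δ / 2)) := by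
          rw [mul_left_comm, ← Real.rpow_add hu0]; ring_nf
      _ ≤ 2 ^ (δ + α) * 1 :=
          mul_le_mul (Real.rpow_le_rpow_of_exponent_le one_le_two (by linarith))
            (Real.rpow_le_one_of_one_le_of_nonpos hu (by linarith)) (by positivity) (by positivity)
      _ = 2 ^ (δ + α) := mul_one _
  calc _ ≤ (δ + α + 1) * ((u + 1) * (L / 2) - u * (L / 2)) / ((u + 1) * (L / 2)) *
          (u * (L / 2)) ^ (-(δ + α)) * (((u + 1) * L) ^ α * (u + 1) ^ (δ / 2 + 1)) := by
        gcongr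
        simpa only [mul_div_assoc] using hdiff
    _ = (δ + α + 1) * 2 ^ (δ + α) * L ^ (-δ) *
          (u ^ (-(δ + α)) * ((u + 1) ^ α * (u + 1) ^ (δ / 2))) := by
        rw [mul_assoc _ ((u * (L / 2)) ^ _), hsplit]
        field_simp
        ring
    _ ≤ (δ + α + 1) * 2 ^ (δ + α) * L ^ (-δ) * 2 ^ (δ + α) := by gcongr
    _ = (δ + α + 1) * 4 ^ (δ + α) * L ^ (-δ) := by
        rw [show (4 : ℝ) = 2 * 2 by norm_num, Real.mul_rpow zero_le_two zero_le_two]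
        ring

lemma ofReal_mul_le_ofReal_mul_div {a c w : ℝ} (m : ℝ≥0∞) (hw : 0 < w) (h : a * w ≤ c) :
    ENNReal.ofReal a * m ≤ ENNReal.ofReal c * (m / ENNReal.ofReal w) := by
  calc ENNReal.ofReal a * m = ENNReal.ofReal a * ENNReal.ofReal w * (m / ENNReal.ofReal w) := by
        rw [mul_assoc, ENNReal.mul_div_cancel' (by simp [hw]) (by simp)]
    _ = ENNReal.ofReal (a * w) * (m / ENNReal.ofReal w) := by rw [ENNReal.ofReal_mul' hw.le]
    _ ≤ ENNReal.ofReal c * (m / ENNReal.ofReal w) := by gcongr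

lemma lintegral_compl_closedBall_rpow_neg_le {X : Type*} [PseudoMetricSpace X] [MeasurableSpace X]
    [OpensMeasurableSpace X] (μ : Measure X) (x₀ : X) {α δ L A : ℝ} (hα : 0 < α) (hδ : 0 ≤ δ)
    (hL : 0 < L) (hA : 0 ≤ A) :
    ∫⁻ t in (closedBall x₀ (L / 2))ᶜ, ENNReal.ofReal (A * dist t x₀ ^ (-(δ + α))) ∂μ ≤
      ENNReal.ofReal (A * ((δ + α + 1) * 4 ^ (δ + α) * L ^ (-δ))) *
        ∑' j : ℕ, μ (closedBall x₀ ((j + 2) * (L / 2))) /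
          ENNReal.ofReal (((j + 2) * L) ^ α * (j + 2) ^ (δ / 2 + 1)) := by
  have hφ : AntitoneOn (fun ρ => A * ρ ^ (-(δ + α))) (Ici (L / 2)) := fun x hx y _ hxy =>
    mul_le_mul_of_nonneg_left
      (Real.rpow_le_rpow_of_nonpos (lt_of_lt_of_le (by positivity) hx) hxy (by linarith)) hA
  have hφ0 : Tendsto (fun ρ => A * ρ ^ (-(δ + α))) atTop (𝓝 0) := by
    have := (tendsto_rpow_neg_atTop (y := δ + α) (by positivity)).const_mul A
    rwa [mul_zero] at this
  refine (lintegral_compl_closedBall_le_tsum μ x₀ (by positivity) hφ hφ0).trans ?_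
  rw [← ENNReal.tsum_mul_left]
  refine ENNReal.tsum_le_tsum fun j => ofReal_mul_le_ofReal_mul_div _ (by positivity) ?_
  have hshell := shell_difference_mul_weight_le hα.le hδ hL (u := (j : ℝ) + 1) (by simp)
  rw [show (j : ℝ) + 2 = j + 1 + 1 by ring]
  calc _ = A * (((((j : ℝ) + 1) * (L / 2)) ^ (-(δ + α)) -
            (((j : ℝ) + 1 + 1) * (L / 2)) ^ (-(δ + α))) *
          ((((j : ℝ) + 1 + 1) * L) ^ α * ((j : ℝ) + 1 + 1) ^ (δ / 2 + 1))) := by ring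
    _ ≤ _ := mul_le_mul_of_nonneg_left hshell hA

lemma IsHolderKernel.lintegral_compl_closedBall_le {E : Type*} [NormedAddCommGroup E]
    [NormedSpace ℝ E] [MeasurableSpace E] [OpensMeasurableSpace E] {μ : Measure E}
    {K : E → E → ℝ} {C δ α : ℝ} (hK : IsHolderKernel K C δ α) (hC : 0 ≤ C) (hδ : 0 ≤ δ)
    (hα : 0 < α) {h : E → ℝ} {cS cJ : E} {ℓ L : ℝ} (hℓ : 0 ≤ ℓ) (hL : 0 < L)
    (hJ : closedBall cJ ℓ ⊆ closedBall cS (L / 4)) (hh : Integrable h μ)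
    (hsupp : ∀ x ∉ closedBall cJ ℓ, h x = 0) (hmean : ∫ x, h x ∂μ = 0) :
    ∫⁻ t in (closedBall cS (L / 2))ᶜ, ‖∫ x, K t x * h x ∂μ‖ₑ ∂μ ≤
      ENNReal.ofReal (2 * C * 2 ^ (δ + α) * ((δ + α + 1) * 4 ^ (δ + α))) *
        ENNReal.ofReal ((ℓ / L) ^ δ * ∫ x, |h x| ∂μ) *
        ∑' j : ℕ, μ (closedBall cS ((j + 2) * (L / 2))) /
          ENNReal.ofReal (((j + 2) * L) ^ α * (j + 2) ^ (δ / 2 + 1)) := by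
  set A := 2 * C * 2 ^ (δ + α) * ℓ ^ δ * ∫ x, |h x| ∂μ
  have hF : ∀ t ∈ (closedBall cS (L / 2))ᶜ,
      ‖∫ x, K t x * h x ∂μ‖ₑ ≤ ENNReal.ofReal (A * dist t cS ^ (-(δ + α))) := by
    intro t ht
    rw [mem_compl_iff, show L / 2 = 2 * (L / 4) by ring] at ht
    rw [Real.enorm_eq_ofReal_abs]
    refine ENNReal.ofReal_le_ofReal ((hK.abs_integral_mul_le hC hδ hα.le hJ ht hh hsupp hmean).trans
      (le_of_eq ?_))
    ring
  calc _ ≤ ∫⁻ t in (closedBall cS (L / 2))ᶜ, ENNReal.ofReal (A * dist t cS ^ (-(δ + α))) ∂μ :=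
        setLIntegral_mono' measurableSet_closedBall.compl hF
    _ ≤ _ := lintegral_compl_closedBall_rpow_neg_le μ cS hα hδ hL (by positivity)
    _ = _ := by
        rw [← ENNReal.ofReal_mul (by positivity)]
        congr 2
        rw [Real.div_rpow hℓ hL.le, Real.rpow_neg hL.le]
        ring

lemma cCube_eq_closedBall {n : ℕ} (c : Fin n → ℝ) {r : ℝ} (hr : 0 ≤ r) :
    cCube n c r = closedBall c r := by
  ext x
  simp only [cCube, mem_ofPred_eq, mem_closedBall, dist_pi_le_iff hr, Real.dist_eq]

theorem stmt12 (n : ℕ) (α δ CK : ℝ) (hα : 0 < α) (hδ0 : 0 < δ)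
    (hCK : 0 < CK) :
    ∃ C : ℝ≥0∞, C ≠ ⊤ ∧
      ∀ (μ : Measure (Fin n → ℝ)) (K : (Fin n → ℝ) → (Fin n → ℝ) → ℝ)
        (cS : Fin n → ℝ) (L : ℝ) (Q : Set (Fin n → ℝ))
        (cJ : Fin n → ℝ) (lJ : ℝ) (hJ : (Fin n → ℝ) → ℝ),
        0 < L → 0 < lJ →
        (∀ t x x' : Fin n → ℝ, 2 * dist x x' < dist t x →
          |K t x - K t x'| ≤ CK * (dist x x' / dist t x) ^ δ / dist t x ^ α) →
        cCube n cS (L / 2) ⊆ Q → MeasurableSet Q →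
        cCube n cJ lJ ⊆ cCube n cS (L / 4) →
        μ (cCube n cJ lJ) ≠ ⊤ →
        Integrable hJ μ →
        (∀ x ∉ cCube n cJ lJ, hJ x = 0) →
        (∫ x, hJ x ∂μ) = 0 →
        (∫ x, |hJ x| ∂μ) ≤ Real.sqrt (μ (cCube n cJ lJ)).toReal →
        ENNReal.ofReal |∫ t in Q \ cCube n cS (L / 2), (∫ x, K t x * hJ x ∂μ) ∂μ|
          ≤ C * ENNReal.ofReal ((lJ / L) ^ δ *
              Real.sqrt (μ (cCube n cJ lJ)).toReal) *
            ∑' m : ℕ, μ (cCube n cS (((m : ℝ) + 1) * L / 2)) /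
              ENNReal.ofReal ((((m : ℝ) + 1) * L) ^ α * ((m : ℝ) + 1) ^ (δ / 2 + 1)) := by
  refine ⟨ENNReal.ofReal (2 * CK * 2 ^ (δ + α) * ((δ + α + 1) * 4 ^ (δ + α))),
    ENNReal.ofReal_ne_top, ?_⟩
  intro μ K cS L Q cJ lJ hJ hL hlJ hK _ _ hJS _ hint hsupp hmean hL1
  rw [cCube_eq_closedBall cJ hlJ.le] at hJS hsupp hL1 ⊢
  rw [cCube_eq_closedBall cS (by positivity)] at hJS
  calc ENNReal.ofReal |∫ t in Q \ cCube n cS (L / 2), ∫ x, K t x * hJ x ∂μ ∂μ|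
      ≤ ∫⁻ t in (closedBall cS (L / 2))ᶜ, ‖∫ x, K t x * hJ x ∂μ‖ₑ ∂μ := by
        rw [cCube_eq_closedBall cS (by positivity), ← Real.enorm_eq_ofReal_abs]
        exact (enorm_integral_le_lintegral_enorm _).trans
          (lintegral_mono_set (sdiff_subset_compl _ _))
    _ ≤ _ := IsHolderKernel.lintegral_compl_closedBall_le hK hCK.le hδ0.le hα hlJ.le hL hJS hint
        hsupp hmean
    _ ≤ _ := by
        refine mul_le_mul' (mul_le_mul_of_nonneg_left (ENNReal.ofReal_le_ofReal ?_) zero_le) ?_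
        · exact mul_le_mul_of_nonneg_left hL1 (by positivity)
        · refine le_of_eq_of_le (tsum_congr fun j => ?_)
            (ENNReal.tsum_comp_le_tsum_of_injective (add_left_injective 1) _)
          rw [cCube_eq_closedBall cS (by positivity)]
          push_cast
          ring_nf
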